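/- There is an absolute constant C₀ such that the following holds. Let N ≥ 1, let a : ℕ → ℂ satisfy |a(n)| ≤ 1 for all n, let K ≥ 2, let θ₁, …, θ_{K−1} ∈ ℝ, and let c₁, …, c_{K−1} be real numbers with |c_k| ≤ C for all k, where C ≥ 1. Then |∑_{n ≤ N} a(n) e(∑_{k=1}^{K−1} 2 c_k cos(2π n θ_k))| ≤ (C₀ C²)^{K−1} · sup_{(l₁, …, l_{K−1}) ∈ ℤ^{K−1}} |∑_{n ≤ N} a(n) e(n (l₁ θ₁ + ⋯ + l_{K−1} θ_{K−1}))|. -/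

import Mathlib

/-!
At `z = 2πic` and `u = e(t)`, the generating function `exp (z (u + u⁻¹)) = ∑_{l ∈ ℤ} I_|l|(2z) uˡ`
of the modified Bessel functions expands `e(2c cos 2πt)` as an absolutely convergent Fourier
series `∑ b_l e(lt)`. Being Fourier coefficients of a unimodular function, the `b_l` are bounded
by `1`; by the power series they decay geometrically once `|l| ≥ 24π|c|`. Hence `∑ |b_l| = O(|c|)`.
Substituting this expansion for one cosine phase at a time trades that phase for an extra linear
phase `l n θ_k`, at the cost of a factor `∑ |b_l| = O(C)`; after `K - 1` steps only sums with
phases `n ∑ l_k θ_k` remain.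
-/

noncomputable def e (x : ℝ) : ℂ := Complex.exp (2 * Real.pi * Complex.I * x)

open Complex Finset
open scoped Nat Real

lemma norm_e (x : ℝ) : ‖e x‖ = 1 := by
  rw [e, show 2 * (π : ℂ) * I * x = (2 * π * x : ℝ) * I by push_cast; ring]
  exact norm_exp_ofReal_mul_I _

lemma e_add (x y : ℝ) : e (x + y) = e x * e y := by
  rw [e, e, e, ← Complex.exp_add]; push_cast; ring_nf

lemma e_int_mul (l : ℤ) (t : ℝ) : e (l * t) = e t ^ l := by
  rw [e, e, ← Complex.exp_int_mul]; push_cast; ring_nf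

lemma e_ne_zero (x : ℝ) : e x ≠ 0 := Complex.exp_ne_zero _

/-- `besselCoeff z n = I_n(2z)`, a modified Bessel function of the first kind. -/
noncomputable def besselCoeff (z : ℂ) (n : ℕ) : ℂ :=
  ∑' j : ℕ, z ^ (2 * j + n) / ((j ! : ℂ) * (j + n)!)

lemma factorial_le_two_pow_mul (j k : ℕ) : (j + k)! ≤ 2 ^ (j + k) * (j ! * k !) := by
  rw [← Nat.choose_mul_factorial_mul_factorial (Nat.le_add_right j k), Nat.add_sub_cancel_left,
    mul_assoc]
  exact Nat.mul_le_mul_right _ (Nat.choose_le_two_pow _ _)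

lemma norm_besselTerm_le (z : ℂ) (j n : ℕ) :
    ‖z ^ (2 * j + n) / ((j ! : ℂ) * (j + n)!)‖ ≤ (2 * ‖z‖) ^ (2 * j + n) / (2 * j + n)! := by
  have hfac : ((2 * j + n)! : ℝ) ≤ 2 ^ (2 * j + n) * (j ! * (j + n)!) := by
    have := factorial_le_two_pow_mul j (j + n)
    rw [show j + (j + n) = 2 * j + n by ring] at this
    exact_mod_cast this
  rw [norm_div, norm_pow, norm_mul, norm_natCast, norm_natCast,
    div_le_div_iff₀ (by positivity) (by positivity)]
  calc ‖z‖ ^ (2 * j + n) * (2 * j + n)!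
    _ ≤ ‖z‖ ^ (2 * j + n) * (2 ^ (2 * j + n) * (j ! * (j + n)!)) :=
        mul_le_mul_of_nonneg_left hfac (by positivity)
    _ = (2 * ‖z‖) ^ (2 * j + n) * (j ! * (j + n)!) := by ring

lemma summable_norm_besselTerm (z : ℂ) (n : ℕ) :
    Summable fun j : ℕ ↦ ‖z ^ (2 * j + n) / ((j ! : ℂ) * (j + n)!)‖ :=
  .of_nonneg_of_le (fun _ ↦ norm_nonneg _) (norm_besselTerm_le z · n)
    ((Real.summable_pow_div_factorial _).comp_injective fun _ _ h ↦ by simpa using h)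

def posNegPartEquiv : ℤ × ℕ ≃ ℕ × ℕ where
  toFun x := (x.2 + x.1.toNat, x.2 + (-x.1).toNat)
  invFun y := (y.1 - y.2, min y.1 y.2)
  left_inv := by rintro ⟨l, j⟩; simp only [Prod.mk.injEq]; omega
  right_inv := by rintro ⟨p, q⟩; simp only [Prod.mk.injEq]; omega

lemma expTerm_mul_expTerm_posNegPartEquiv (z : ℂ) {u : ℂ} (hu : u ≠ 0) (l : ℤ) (j : ℕ) :
    (z * u) ^ (posNegPartEquiv (l, j)).1 / (posNegPartEquiv (l, j)).1 ! *
        ((z * u⁻¹) ^ (posNegPartEquiv (l, j)).2 / (posNegPartEquiv (l, j)).2 !) =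
      z ^ (2 * j + l.natAbs) / ((j ! : ℂ) * (j + l.natAbs)!) * u ^ l := by
  obtain ⟨n, rfl | rfl⟩ := Int.eq_nat_or_neg l
  · simp only [posNegPartEquiv, Equiv.coe_fn_mk, Int.toNat_natCast, Int.toNat_neg_natCast,
      Int.natAbs_natCast, zpow_natCast, add_zero]
    rw [mul_pow, mul_pow, inv_pow]
    field_simp
    ring
  · simp only [posNegPartEquiv, Equiv.coe_fn_mk, Int.toNat_natCast, Int.toNat_neg_natCast, neg_neg,
      Int.natAbs_neg, Int.natAbs_natCast, zpow_neg, zpow_natCast, add_zero]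
    rw [mul_pow, mul_pow, inv_pow]
    field_simp
    ring

theorem hasSum_besselCoeff_mul_zpow (z : ℂ) {u : ℂ} (hu : u ≠ 0) :
    HasSum (fun l : ℤ ↦ besselCoeff z l.natAbs * u ^ l) (exp (z * (u + u⁻¹))) := by
  have hexp (w : ℂ) : HasSum (fun p : ℕ ↦ w ^ p / p !) (exp w) := by
    rw [exp_eq_exp_ℂ]; exact NormedSpace.expSeries_div_hasSum_exp w
  have hsummable := summable_mul_of_summable_norm
    (NormedSpace.norm_expSeries_div_summable (z * u))
    (NormedSpace.norm_expSeries_div_summable (z * u⁻¹))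
  have hprod := (hexp (z * u)).mul (hexp (z * u⁻¹)) hsummable
  rw [← exp_add, ← mul_add, ← posNegPartEquiv.hasSum_iff] at hprod
  refine hprod.prod_fiberwise fun l ↦ ?_
  simp only [Function.comp_apply, expTerm_mul_expTerm_posNegPartEquiv z hu]
  exact (summable_norm_besselTerm z l.natAbs).of_norm.hasSum.mul_right _

lemma pow_div_factorial_le_half_pow {x : ℝ} (hx : 0 ≤ x) {m : ℕ} (hm : 6 * x ≤ m) :
    x ^ m / m ! ≤ (1 / 2) ^ m :=
  calc x ^ m / m ! ≤ (m / 6) ^ m / m ! := by gcongr; linarith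
    _ = (m ^ m / m !) * (1 / 6) ^ m := by rw [div_pow, div_pow, one_pow]; ring
    _ ≤ Real.exp m * (1 / 6) ^ m := by
      gcongr; exact Real.pow_div_factorial_le_exp _ (by positivity) m
    _ = (Real.exp 1 / 6) ^ m := by rw [← Real.exp_one_pow]; ring
    _ ≤ (1 / 2) ^ m := pow_le_pow_left₀ (by positivity) (by linarith [Real.exp_one_lt_d9]) m

lemma norm_besselCoeff_le_two_mul_half_pow {z : ℂ} {n : ℕ} (hn : 12 * ‖z‖ ≤ n) :
    ‖besselCoeff z n‖ ≤ 2 * (1 / 2) ^ n := by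
  have hterm (j : ℕ) : ‖z ^ (2 * j + n) / ((j ! : ℂ) * (j + n)!)‖ ≤ (1 / 2) ^ n * (1 / 2) ^ j :=
    calc _ ≤ (2 * ‖z‖) ^ (2 * j + n) / (2 * j + n)! := norm_besselTerm_le z j n
      _ ≤ (1 / 2) ^ (2 * j + n) :=
        pow_div_factorial_le_half_pow (by positivity) (by push_cast; linarith)
      _ ≤ (1 / 2) ^ (n + j) := pow_le_pow_of_le_one (by norm_num) (by norm_num) (by omega)
      _ = (1 / 2) ^ n * (1 / 2) ^ j := pow_add _ _ _
  calc ‖besselCoeff z n‖ ≤ ∑' j, ‖z ^ (2 * j + n) / ((j ! : ℂ) * (j + n)!)‖ :=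
        norm_tsum_le_tsum_norm (summable_norm_besselTerm z n)
    _ ≤ ∑' j : ℕ, (1 / 2 : ℝ) ^ n * (1 / 2) ^ j :=
        Summable.tsum_le_tsum hterm (summable_norm_besselTerm z n)
          (summable_geometric_two.mul_left _)
    _ = 2 * (1 / 2) ^ n := by rw [tsum_mul_left, tsum_geometric_two, mul_comm]

lemma summable_norm_besselCoeff (z : ℂ) : Summable fun n ↦ ‖besselCoeff z n‖ :=
  .of_norm_bounded_eventually_nat (summable_geometric_two.mul_left 2) <|
    Filter.eventually_atTop.2 ⟨⌈12 * ‖z‖⌉₊, fun _ hn ↦ by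
      rw [norm_norm]; exact norm_besselCoeff_le_two_mul_half_pow (Nat.ceil_le.1 hn)⟩

lemma tsum_norm_besselCoeff_le {z : ℂ} (h : ∀ n, ‖besselCoeff z n‖ ≤ 1) :
    ∑' n, ‖besselCoeff z n‖ ≤ 12 * ‖z‖ + 5 := by
  set n₀ := ⌈12 * ‖z‖⌉₊
  have hhead : ∑ n ∈ range n₀, ‖besselCoeff z n‖ ≤ 12 * ‖z‖ + 1 :=
    calc _ ≤ ∑ n ∈ range n₀, (1 : ℝ) := sum_le_sum fun n _ ↦ h n
      _ = n₀ := by simp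
      _ ≤ 12 * ‖z‖ + 1 := (Nat.ceil_lt_add_one (by positivity)).le
  have htail : ∑' n, ‖besselCoeff z (n + n₀)‖ ≤ 4 :=
    calc _ ≤ ∑' n : ℕ, 2 * (1 / 2 : ℝ) ^ n := by
          refine Summable.tsum_le_tsum (fun n ↦ ?_)
            ((summable_nat_add_iff n₀).2 (summable_norm_besselCoeff z))
            (summable_geometric_two.mul_left 2)
          refine (norm_besselCoeff_le_two_mul_half_pow ?_).trans ?_
          · exact (Nat.le_ceil _).trans (by exact_mod_cast Nat.le_add_left n₀ n)
          · exact mul_le_mul_of_nonneg_left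
              (pow_le_pow_of_le_one (by norm_num) (by norm_num) (by omega)) zero_le_two
      _ = 4 := by rw [tsum_mul_left, tsum_geometric_two]; norm_num
  rw [← (summable_norm_besselCoeff z).sum_add_tsum_nat_add n₀]
  linarith

lemma Summable.comp_natAbs {G : Type*} [AddCommGroup G] [TopologicalSpace G]
    [IsTopologicalAddGroup G] {f : ℕ → G} (hf : Summable f) : Summable fun l : ℤ ↦ f l.natAbs :=
  .of_nat_of_neg (by simpa using hf) (by simpa using hf)

lemma tsum_comp_natAbs_le_two_mul {f : ℕ → ℝ} (hf₀ : ∀ n, 0 ≤ f n) (hf : Summable f) :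
    ∑' l : ℤ, f l.natAbs ≤ 2 * ∑' n, f n := by
  rw [Summable.tsum_of_nat_of_neg (f := fun l : ℤ ↦ f l.natAbs) (by simpa using hf)
    (by simpa using hf)]
  simp only [Int.natAbs_natCast, Int.natAbs_neg, Int.natAbs_zero]
  linarith [hf₀ 0]

lemma e_two_mul_cos (c t : ℝ) :
    e (2 * c * Real.cos (2 * π * t)) = exp (2 * π * I * c * (e t + (e t)⁻¹)) := by
  rw [e, e, ← Complex.exp_neg, ofReal_mul, ofReal_mul, ofReal_cos, cos]
  congr 1
  push_cast
  ring_nf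

theorem hasSum_besselCoeff_mul_e (c t : ℝ) :
    HasSum (fun l : ℤ ↦ besselCoeff (2 * π * I * c) l.natAbs * e (l * t))
      (e (2 * c * Real.cos (2 * π * t))) := by
  simp_rw [e_int_mul, e_two_mul_cos]
  exact hasSum_besselCoeff_mul_zpow _ (e_ne_zero t)

lemma integral_e_int_mul (m : ℤ) : ∫ t in (0 : ℝ)..1, e (m * t) = if m = 0 then 1 else 0 := by
  split_ifs with hm
  · simp [hm, e]
  have hc : 2 * π * I * m ≠ 0 := by simp [hm, Real.pi_ne_zero, I_ne_zero]
  simp_rw [e, show ∀ t : ℝ, 2 * (π : ℂ) * I * ↑(↑m * t) = (2 * π * I * m) * t from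
    fun t ↦ by push_cast; ring]
  rw [integral_exp_mul_complex hc, ofReal_one, ofReal_zero, mul_zero, Complex.exp_zero, mul_one,
    show 2 * π * I * m = m * (2 * π * I) by ring, Complex.exp_int_mul_two_pi_mul_I, sub_self,
    zero_div]

lemma besselCoeff_eq_integral (c : ℝ) (n : ℤ) :
    besselCoeff (2 * π * I * c) n.natAbs =
      ∫ t in (0 : ℝ)..1, e (2 * c * Real.cos (2 * π * t)) * e (-n * t) := by
  let f (l : ℤ) : C(ℝ, ℂ) :=
    ⟨fun t ↦ besselCoeff (2 * π * I * c) l.natAbs * e ((l - n : ℤ) * t), by unfold e; fun_prop⟩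
  have hf (t : ℝ) : HasSum (fun l ↦ f l t) (e (2 * c * Real.cos (2 * π * t)) * e (-n * t)) := by
    refine ((hasSum_besselCoeff_mul_e c t).mul_right (e (-n * t))).congr_fun fun l ↦ ?_
    simp only [f, ContinuousMap.coe_mk, mul_assoc, ← e_add]
    push_cast
    ring_nf
  have hnorm : Summable fun l ↦
      ‖(f l).restrict (⟨Set.uIcc 0 1, isCompact_uIcc⟩ : TopologicalSpace.Compacts ℝ)‖ :=
    .of_nonneg_of_le (fun _ ↦ norm_nonneg _)
      (fun l ↦ (ContinuousMap.norm_le _ (norm_nonneg _)).2 fun t ↦ by simp [f, norm_e])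
      ((summable_norm_besselCoeff (2 * π * I * c)).comp_natAbs)
  have hcoeff (l : ℤ) : ∫ t in (0 : ℝ)..1, f l t =
      if l = n then besselCoeff (2 * π * I * c) n.natAbs else 0 := by
    simp only [f, ContinuousMap.coe_mk]
    rw [intervalIntegral.integral_const_mul, integral_e_int_mul]
    split_ifs <;> simp_all [sub_eq_zero]
  rw [← intervalIntegral.integral_congr fun t _ ↦ (hf t).tsum_eq]
  exact ((hasSum_ite_eq n _).congr_fun hcoeff).unique
    (intervalIntegral.hasSum_intervalIntegral_of_summable_norm hnorm)

lemma norm_besselCoeff_le_one (c : ℝ) (n : ℕ) : ‖besselCoeff (2 * π * I * c) n‖ ≤ 1 := by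
  rw [← Int.natAbs_natCast n, besselCoeff_eq_integral]
  simpa using
    intervalIntegral.norm_integral_le_of_norm_le_const (a := 0) (b := 1) (C := 1)
      (f := fun t ↦ e (2 * c * Real.cos (2 * π * t)) * e (-n * t)) fun t _ ↦ by simp [norm_e]

lemma tsum_norm_besselCoeff_int_le (c : ℝ) :
    ∑' l : ℤ, ‖besselCoeff (2 * π * I * c) l.natAbs‖ ≤ 48 * π * |c| + 10 := by
  have h := tsum_norm_besselCoeff_le (norm_besselCoeff_le_one c)
  have hz : ‖2 * π * I * c‖ = 2 * π * |c| := by simp [abs_of_pos Real.pi_pos]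
  calc _ ≤ 2 * ∑' n, ‖besselCoeff (2 * π * I * c) n‖ :=
        tsum_comp_natAbs_le_two_mul (fun _ ↦ norm_nonneg _) (summable_norm_besselCoeff _)
    _ ≤ 48 * π * |c| + 10 := by rw [hz] at h; linarith

theorem norm_sum_mul_e_two_mul_cos_le {ι : Type*} (s : Finset ι) (b : ι → ℂ) (x : ι → ℝ)
    (c S : ℝ) (hS : ∀ m : ℤ, ‖∑ i ∈ s, b i * e (m * x i)‖ ≤ S) :
    ‖∑ i ∈ s, b i * e (2 * c * Real.cos (2 * π * x i))‖ ≤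
      (∑' l : ℤ, ‖besselCoeff (2 * π * I * c) l.natAbs‖) * S := by
  have hsum : HasSum (fun l : ℤ ↦ besselCoeff (2 * π * I * c) l.natAbs * ∑ i ∈ s, b i * e (l * x i))
      (∑ i ∈ s, b i * e (2 * c * Real.cos (2 * π * x i))) := by
    simp_rw [mul_sum, mul_left_comm _ (b _)]
    exact hasSum_sum fun i _ ↦ (hasSum_besselCoeff_mul_e c (x i)).mul_left (b i)
  rw [← tsum_mul_right]
  refine hsum.norm_le_of_bounded ((summable_norm_besselCoeff _).comp_natAbs.mul_right S).hasSum
    fun l ↦ ?_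
  rw [norm_mul]
  exact mul_le_mul_of_nonneg_left (hS l) (norm_nonneg _)

theorem norm_sum_mul_e_sum_two_mul_cos_le (s : Finset ℕ) (a : ℕ → ℂ) (L : AddSubgroup ℝ)
    (θ c : ℕ → ℝ) (S : ℝ) (hS : ∀ x ∈ L, ‖∑ n ∈ s, a n * e (n * x)‖ ≤ S) (T : Finset ℕ)
    (hθ : ∀ k ∈ T, θ k ∈ L) {x : ℝ} (hx : x ∈ L) :
    ‖∑ n ∈ s, a n * e (∑ k ∈ T, 2 * c k * Real.cos (2 * π * (n * θ k)) + n * x)‖ ≤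
      (∏ k ∈ T, ∑' l : ℤ, ‖besselCoeff (2 * π * I * c k) l.natAbs‖) * S := by
  induction T using Finset.induction_on generalizing x with
  | empty => simpa using hS x hx
  | insert k T hk ih =>
    have hterm (n : ℕ) :
        a n * e (∑ j ∈ insert k T, 2 * c j * Real.cos (2 * π * (n * θ j)) + n * x) =
        a n * e (∑ j ∈ T, 2 * c j * Real.cos (2 * π * (n * θ j)) + n * x) *
          e (2 * c k * Real.cos (2 * π * (n * θ k))) := by
      rw [sum_insert hk, add_comm (2 * c k * _), add_right_comm, e_add, ← mul_assoc]
    rw [sum_congr rfl fun n _ ↦ hterm n, prod_insert hk, mul_assoc]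
    refine norm_sum_mul_e_two_mul_cos_le s _ (fun n ↦ n * θ k) (c k) _ fun m ↦ ?_
    calc _ = ‖∑ n ∈ s, a n * e (∑ j ∈ T, 2 * c j * Real.cos (2 * π * (n * θ j)) +
            n * (x + m • θ k))‖ := by
          congr 1
          refine sum_congr rfl fun n _ ↦ ?_
          rw [zsmul_eq_mul, mul_left_comm (m : ℝ), mul_add, ← add_assoc, e_add (_ + _), mul_assoc]
      _ ≤ _ := ih (fun j hj ↦ hθ j (mem_insert_of_mem hj))
          (add_mem hx (zsmul_mem (hθ k (mem_insert_self k T)) m))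

def intCombinationHom (s : Finset ℕ) (θ : ℕ → ℝ) : (ℕ → ℤ) →+ ℝ where
  toFun l := ∑ k ∈ s, (l k : ℝ) * θ k
  map_zero' := by simp
  map_add' l l' := by simp [add_mul, sum_add_distrib]

lemma mem_range_intCombinationHom {s : Finset ℕ} (θ : ℕ → ℝ) {k : ℕ} (hk : k ∈ s) :
    θ k ∈ (intCombinationHom s θ).range :=
  ⟨Pi.single k 1, by simp [intCombinationHom, Pi.single_apply, hk]⟩

lemma norm_sum_mul_e_le_card (s : Finset ℕ) {a : ℕ → ℂ} (ha : ∀ n, ‖a n‖ ≤ 1) (ψ : ℕ → ℝ) :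
    ‖∑ n ∈ s, a n * e (ψ n)‖ ≤ s.card :=
  (norm_sum_le _ _).trans <| by simpa [norm_e] using sum_le_sum fun n _ ↦ ha n

/-- removing `K - 1` cosine phases at the cost of a sup over integer
linear combinations of the frequencies, with an absolute constant `C₀`. -/
theorem remove_all_cosine_phases :
    ∃ C₀ : ℝ, ∀ N : ℕ, 1 ≤ N → ∀ a : ℕ → ℂ, (∀ n, ‖a n‖ ≤ 1) →
      ∀ K : ℕ, 2 ≤ K → ∀ (θ : ℕ → ℝ) (c : ℕ → ℝ) (C : ℝ), 1 ≤ C →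
        (∀ k ∈ Finset.Icc 1 (K - 1), |c k| ≤ C) →
        ‖∑ n ∈ Finset.Icc 1 N,
            a n * e (∑ k ∈ Finset.Icc 1 (K - 1),
              2 * c k * Real.cos (2 * Real.pi * (n * θ k)))‖
          ≤ (C₀ * C ^ 2) ^ (K - 1) *
            ⨆ l : ℕ → ℤ, ‖∑ n ∈ Finset.Icc 1 N,
              a n * e ((n : ℝ) * ∑ k ∈ Finset.Icc 1 (K - 1), (l k : ℝ) * θ k)‖ := by
  refine ⟨202, fun N _ a ha K _ θ c C hC hc ↦ ?_⟩
  set T := Icc 1 (K - 1)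
  set S := ⨆ l : ℕ → ℤ, ‖∑ n ∈ Icc 1 N, a n * e (n * ∑ k ∈ T, (l k : ℝ) * θ k)‖
  have hS : ∀ x ∈ (intCombinationHom T θ).range, ‖∑ n ∈ Icc 1 N, a n * e (n * x)‖ ≤ S := by
    rintro _ ⟨l, rfl⟩
    have hbdd : BddAbove (Set.range fun l : ℕ → ℤ ↦
        ‖∑ n ∈ Icc 1 N, a n * e (n * ∑ k ∈ T, (l k : ℝ) * θ k)‖) :=
      ⟨_, Set.forall_mem_range.2 fun l ↦ norm_sum_mul_e_le_card _ ha _⟩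
    exact le_ciSup hbdd l
  have hcoeff : ∀ k ∈ T, ∑' l : ℤ, ‖besselCoeff (2 * π * I * c k) l.natAbs‖ ≤ 202 * C ^ 2 :=
    fun k hk ↦ (tsum_norm_besselCoeff_int_le (c k)).trans <| by
      nlinarith [hc k hk, Real.pi_lt_four, Real.pi_pos, abs_nonneg (c k)]
  calc _ ≤ (∏ k ∈ T, ∑' l : ℤ, ‖besselCoeff (2 * π * I * c k) l.natAbs‖) * S := by
        simpa using norm_sum_mul_e_sum_two_mul_cos_le _ a _ θ c S hS T
          (fun k ↦ mem_range_intCombinationHom θ) (zero_mem _)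
    _ ≤ (202 * C ^ 2) ^ (K - 1) * S := by
        gcongr
        · exact (norm_nonneg _).trans (hS 0 (zero_mem _))
        · simpa [T] using prod_le_prod (fun _ _ ↦ tsum_nonneg fun _ ↦ norm_nonneg _) hcoeff
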